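/- Kirkwood's closure need not be normalized: for the probability distribution p on Fin 2 × Fin 2 × Fin 2 with p(0,0,0) = p(1,1,1) = 1/2 and p = 0 elsewhere, with single and pair marginals p_i and p_{ij} defined by summing p over the omitted coordinates, one has ∑_{a,b,c} p₁₂(a,b) · p₂₃(b,c) · p₁₃(a,c) / (p₁(a) · p₂(b) · p₃(c)) = 2 ≠ 1. -/
import Mathlib


open Finset

/-- The specific distribution on `Fin 2 × Fin 2 × Fin 2` with mass `1/2` at `(0,0,0)` and
`(1,1,1)`. -/
noncomputable def pDiag : Fin 2 × Fin 2 × Fin 2 → ℝ :=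
  fun x => if x = (0, 0, 0) ∨ x = (1, 1, 1) then 1 / 2 else 0

/-- Single marginals. -/
noncomputable def pDiag1 (a : Fin 2) : ℝ := ∑ b : Fin 2, ∑ c : Fin 2, pDiag (a, b, c)
noncomputable def pDiag2 (b : Fin 2) : ℝ := ∑ a : Fin 2, ∑ c : Fin 2, pDiag (a, b, c)
noncomputable def pDiag3 (c : Fin 2) : ℝ := ∑ a : Fin 2, ∑ b : Fin 2, pDiag (a, b, c)

/-- Pair marginals. -/
noncomputable def pDiag12 (a b : Fin 2) : ℝ := ∑ c : Fin 2, pDiag (a, b, c)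
noncomputable def pDiag23 (b c : Fin 2) : ℝ := ∑ a : Fin 2, pDiag (a, b, c)
noncomputable def pDiag13 (a c : Fin 2) : ℝ := ∑ b : Fin 2, pDiag (a, b, c)

/-- Kirkwood's closure of `pDiag`. -/
noncomputable def kirkwoodDiag (a b c : Fin 2) : ℝ :=
  pDiag12 a b * pDiag23 b c * pDiag13 a c / (pDiag1 a * pDiag2 b * pDiag3 c)

/-- Kirkwood's closure need not be normalized: for the two-point distribution `pDiag`,
the total mass of the Kirkwood closure is `2 ≠ 1`. -/
theorem kirkwood_not_normalized :
    (∑ a : Fin 2, ∑ b : Fin 2, ∑ c : Fin 2, kirkwoodDiag a b c) = 2 ∧ (2 : ℝ) ≠ 1 := by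
  constructor
  · simp [Fin.sum_univ_two, kirkwoodDiag, pDiag12, pDiag23, pDiag13, pDiag1, pDiag2, pDiag3, pDiag, Prod.ext_iff]
    norm_num
  · norm_num
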